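/- For a polygon dissection R of the (n+3)-gon and the associated generalised frieze values m_R, each difference m_R(i−1,j−1)·m_R(i,j) − m_R(i−1,j)·m_R(i,j−1) equals 0 or 1, where a factor m_R(a,b) is interpreted as 1 if a and b are neighbouring vertices (i.e. the corresponding object is zero). -/

import Mathlib

/-- `x` lies strictly between `a` and `b` in the cyclic order on the vertices
`ZMod m` of a convex `m`-gon. -/
def StrBtw (m : ℕ) [NeZero m] (a x b : ZMod m) : Prop :=
  (x - a).val ≠ 0 ∧ (x - a).val < (b - a).val

/-- Two chords of the `m`-gon (given by their pairs of endpoints) cross: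
the endpoints of one strictly separate the endpoints of the other. -/
def Crosses (m : ℕ) [NeZero m] (d d' : ZMod m × ZMod m) : Prop :=
  (StrBtw m d.1 d'.1 d.2 ∧ StrBtw m d.2 d'.2 d.1) ∨
  (StrBtw m d.1 d'.2 d.2 ∧ StrBtw m d.2 d'.1 d.1)

/-!
Let `(b, a)` be a chord crossing no diagonal of the dissection and let `b, i - 1, i, a` follow
each other in the cyclic order. We show that the diamond
`m(i-1,a) m(i,b) - m(i-1,b) m(i,a)` is `0` or `1`, by strong induction on the length of the
arc from `b` to `a`; the theorem is the case of the edge `(b, a) = (j, j - 1)`.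

If no diagonal `(p, q) ≠ (b, a)` with `b ≤ p ≤ i - 1 < i ≤ q ≤ a` exists, the four chords from
`i - 1, i` to `a, b` lie in one piece, so all four values are `1`. Otherwise choose such a
diagonal of maximal length. Maximality forces `a` and `b` to see both `p` and `q`, so the
recursion rule splits every value `m(x, y)` whose chord crosses `(p, q)` as
`m(x, p) + m(x, q)`. If `p ≠ b` and `q ≠ a`, then `m(x, a) = m(x, b)` for `x = i - 1, i` and
the diamond vanishes; if `(p, q)` is `(b, i)` or `(i - 1, a)` it equals `1`; otherwise `(p, q)`
shares one endpoint with `(b, a)` and the diamond equals the diamond for the shorter chord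
`(b, q)` or `(p, a)`.
-/

section CyclicOrder

variable {N : ℕ} [NeZero N]

theorem ZMod.val_sub_add_val_eq_or (x y : ZMod N) :
    (x - y).val + y.val = x.val ∨ (x - y).val + y.val = x.val + N := by
  rcases lt_or_ge ((x - y).val + y.val) N with h | h
  · left; rw [← ZMod.val_add_of_lt h, sub_add_cancel]
  · right; rw [ZMod.val_add_val_of_le h, sub_add_cancel]

theorem ZMod.val_sub_sub_eq_or (c x y : ZMod N) :
    (x - y).val + (y - c).val = (x - c).val ∨ (x - y).val + (y - c).val = (x - c).val + N := by
  simpa only [sub_sub_sub_cancel_right] using ZMod.val_sub_add_val_eq_or (x - c) (y - c)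

theorem ZMod.val_sub_sub_eq_of_le {c x y : ZMod N} (h : (y - c).val ≤ (x - c).val) :
    (x - y).val = (x - c).val - (y - c).val := by
  rw [← ZMod.val_sub h, sub_sub_sub_cancel_right]

theorem ZMod.eq_of_val_sub_eq {c x y : ZMod N} (h : (x - c).val = (y - c).val) : x = y :=
  sub_left_injective (ZMod.val_injective N h)

theorem ZMod.val_sub_eq_val_sub_one_sub_add_one {b i : ZMod N} (h : i ≠ b) :
    (i - b).val = (i - 1 - b).val + 1 := by
  have h0 : 0 < (i - b).val := ZMod.val_pos.2 (sub_ne_zero.2 h)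
  have hN : 1 < N := by have := ZMod.val_lt (i - b); omega
  have h1 : (i - (i - 1)).val = 1 := by
    rw [sub_sub_cancel, ZMod.val_one_eq_one_mod, Nat.mod_eq_of_lt hN]
  have := ZMod.val_sub_sub_eq_or b i (i - 1)
  have := ZMod.val_lt (i - 1 - b)
  omega

def CycBtw (s t r : ℕ) : Prop := (s < t ∧ t < r) ∨ (r < s ∧ s < t) ∨ (t < r ∧ r < s)

/-- All cyclic-order arguments below are carried out by `omega` in the positions `(· - c).val`
of the vertices counted from a suitable base vertex `c`. -/
theorem strBtw_iff_cycBtw (c a x b : ZMod N) :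
    StrBtw N a x b ↔ CycBtw (a - c).val (x - c).val (b - c).val := by
  have := ZMod.val_sub_sub_eq_or c x a
  have := ZMod.val_sub_sub_eq_or c b a
  have := ZMod.val_lt (x - a)
  have := ZMod.val_lt (b - a)
  have := ZMod.val_lt (a - c)
  have := ZMod.val_lt (x - c)
  have := ZMod.val_lt (b - c)
  unfold StrBtw CycBtw
  omega

theorem crosses_iff_cycBtw (c x y u w : ZMod N) :
    Crosses N (x, y) (u, w) ↔
      (CycBtw (x - c).val (u - c).val (y - c).val ∧
        CycBtw (y - c).val (w - c).val (x - c).val) ∨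
      (CycBtw (x - c).val (w - c).val (y - c).val ∧
        CycBtw (y - c).val (u - c).val (x - c).val) := by
  simp only [Crosses, strBtw_iff_cycBtw c]

theorem crosses_swap_left (x y : ZMod N) (d : ZMod N × ZMod N) :
    Crosses N (y, x) d ↔ Crosses N (x, y) d := by
  unfold Crosses; tauto

theorem crosses_swap_right (x y u w : ZMod N) :
    Crosses N (x, y) (w, u) ↔ Crosses N (x, y) (u, w) := by
  unfold Crosses; tauto

theorem not_crosses_add_one (hN : 1 < N) (x : ZMod N) (d : ZMod N × ZMod N) :
    ¬ Crosses N (x, x + 1) d := by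
  have h1 : (x + 1 - x).val = 1 := by
    rw [add_sub_cancel_left, ZMod.val_one_eq_one_mod, Nat.mod_eq_of_lt hN]
  rw [crosses_iff_cycBtw x, sub_self, ZMod.val_zero, h1]
  unfold CycBtw
  omega

theorem crosses_of_interleave (c : ZMod N) {x y u w : ZMod N}
    (h₁ : (u - c).val < (x - c).val) (h₂ : (x - c).val < (w - c).val)
    (h₃ : (w - c).val < (y - c).val) : Crosses N (x, y) (u, w) := by
  rw [crosses_iff_cycBtw c]
  unfold CycBtw
  omega

theorem crosses_of_interleave' (c : ZMod N) {x y u w : ZMod N}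
    (h₁ : (y - c).val < (u - c).val) (h₂ : (u - c).val < (x - c).val)
    (h₃ : (x - c).val < (w - c).val) : Crosses N (x, y) (u, w) := by
  rw [crosses_iff_cycBtw c]
  unfold CycBtw
  omega

end CyclicOrder

section Dissection

variable {N : ℕ} [NeZero N] (D : Finset (ZMod N × ZMod N))

def Uncrossed (x y : ZMod N) : Prop := ∀ d ∈ D, ¬ Crosses N (x, y) d

variable {D}

theorem Uncrossed.symm {x y : ZMod N} (h : Uncrossed D x y) : Uncrossed D y x :=
  fun d hd hc => h d hd ((crosses_swap_left x y d).1 hc)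

theorem uncrossed_add_one (hN : 1 < N) (x : ZMod N) : Uncrossed D x (x + 1) :=
  fun d _ => not_crosses_add_one hN x d

theorem uncrossed_of_mem (hD : ∀ d ∈ D, ∀ d' ∈ D, ¬ Crosses N d d') {p q : ZMod N}
    (hpq : (p, q) ∈ D ∨ (q, p) ∈ D) : Uncrossed D p q := by
  rcases hpq with h | h
  · exact hD _ h
  · exact Uncrossed.symm (hD _ h)

/-- Counting positions from `b`, the chord `(p, q)` satisfies `b ≤ p ≤ k < q ≤ a` and differs
from `(b, a)`: it cuts the edge `(k, k + 1)` off the rest of the arc from `b` to `a`. -/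
def SpansEdge (b a k p q : ZMod N) : Prop :=
  (p - b).val ≤ (k - b).val ∧ (k - b).val < (q - b).val ∧ (q - b).val ≤ (a - b).val ∧
    ¬((p - b).val = 0 ∧ (q - b).val = (a - b).val)

theorem uncrossed_of_forall_not_spansEdge {a b k x : ZMod N} (hab : Uncrossed D a b)
    (hx : (x - b).val = (k - b).val ∨ (x - b).val = (k - b).val + 1)
    (hxa : (x - b).val < (a - b).val)
    (h : ∀ u w, (u, w) ∈ D → ¬ SpansEdge b a k u w ∧ ¬ SpansEdge b a k w u) :
    Uncrossed D x a ∧ Uncrossed D x b := by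
  suffices ∀ u w, (u, w) ∈ D → ¬ Crosses N (x, a) (u, w) ∧ ¬ Crosses N (x, b) (u, w) from
    ⟨fun d hd => (this d.1 d.2 hd).1, fun d hd => (this d.1 d.2 hd).2⟩
  intro u w hd
  have := hab _ hd
  have := h u w hd
  have := ZMod.val_lt (a - b)
  have := ZMod.val_lt (u - b)
  have := ZMod.val_lt (w - b)
  have hb : (b - b).val = 0 := by simp
  simp only [crosses_iff_cycBtw b, hb, SpansEdge, CycBtw] at *
  omega

theorem spansEdge_of_crosses {a b k p q u w : ZMod N}
    (hab : ¬ Crosses N (a, b) (u, w)) (hpq : ¬ Crosses N (p, q) (u, w))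
    (hspan : SpansEdge b a k p q)
    (hc : Crosses N (a, p) (u, w) ∨ Crosses N (a, q) (u, w) ∨ Crosses N (b, p) (u, w) ∨
      Crosses N (b, q) (u, w)) :
    (SpansEdge b a k u w ∧ (q - b).val - (p - b).val < (w - b).val - (u - b).val) ∨
    (SpansEdge b a k w u ∧ (q - b).val - (p - b).val < (u - b).val - (w - b).val) := by
  have := ZMod.val_lt (u - b)
  have := ZMod.val_lt (w - b)
  have := ZMod.val_lt (a - b)
  have hb : (b - b).val = 0 := by simp
  simp only [crosses_iff_cycBtw b, hb] at hab hpq hc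
  simp only [SpansEdge, CycBtw] at *
  rcases hc with hc | hc | hc | hc <;> omega

theorem exists_spansEdge_uncrossed (hD : ∀ d ∈ D, ∀ d' ∈ D, ¬ Crosses N d d')
    {a b k : ZMod N} (hab : Uncrossed D a b)
    (h : ∃ u w, (u, w) ∈ D ∧ (SpansEdge b a k u w ∨ SpansEdge b a k w u)) :
    ∃ p q, ((p, q) ∈ D ∨ (q, p) ∈ D) ∧ SpansEdge b a k p q ∧
      Uncrossed D a p ∧ Uncrossed D a q ∧ Uncrossed D b p ∧ Uncrossed D b q := by
  classical
  set S := (D ∪ D.image Prod.swap).filter fun d => SpansEdge b a k d.1 d.2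
  have hS : S.Nonempty := by
    obtain ⟨u, w, hd, hs | hs⟩ := h
    · exact ⟨(u, w), by simp [S, hd, hs]⟩
    · exact ⟨(w, u), by simp [S, hd, hs]⟩
  -- a spanning chord of maximal length sees both `a` and `b`
  obtain ⟨⟨p, q⟩, hpqS, hmax⟩ :=
    S.exists_max_image (fun d => (d.2 - b).val - (d.1 - b).val) hS
  obtain ⟨hpqD, hspan⟩ : ((p, q) ∈ D ∨ (q, p) ∈ D) ∧ SpansEdge b a k p q := by
    simpa [S, or_comm] using hpqS
  have hsees : ∀ u w, (Crosses N (a, p) (u, w) ∨ Crosses N (a, q) (u, w) ∨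
      Crosses N (b, p) (u, w) ∨ Crosses N (b, q) (u, w)) → (u, w) ∉ D := by
    intro u w hc hd
    rcases spansEdge_of_crosses (hab _ hd) (uncrossed_of_mem hD hpqD _ hd) hspan hc with
      ⟨hs, hlt⟩ | ⟨hs, hlt⟩
    · exact (hmax (u, w) (by simp [S, hd, hs])).not_gt hlt
    · exact (hmax (w, u) (by simp [S, hd, hs])).not_gt hlt
  refine ⟨p, q, hpqD, hspan, ?_, ?_, ?_, ?_⟩ <;>
    rintro ⟨u, w⟩ hd hc <;> exact hsees u w (by tauto) hd

end Dissection

section Frieze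

variable {N : ℕ} {m : ZMod N → ZMod N → ℕ}

def diamond (m : ZMod N → ZMod N → ℕ) (i a b : ZMod N) : ℤ :=
  m (i - 1) a * m i b - m (i - 1) b * m i a

theorem diamond_eq_zero_of_apply_eq {i a b : ZMod N} (h₁ : m (i - 1) a = m (i - 1) b)
    (h₂ : m i a = m i b) : diamond m i a b = 0 := by
  rw [diamond, h₁, h₂, sub_self]

theorem diamond_eq_diamond_of_apply_left {i a b q : ZMod N}
    (h₁ : m (i - 1) a = m (i - 1) b + m (i - 1) q) (h₂ : m i a = m i b + m i q) :
    diamond m i a b = diamond m i q b := by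
  simp only [diamond, h₁, h₂]
  push_cast
  ring

theorem diamond_eq_diamond_of_apply_right {i a b p : ZMod N}
    (h₁ : m (i - 1) b = m (i - 1) p + m (i - 1) a) (h₂ : m i b = m i p + m i a) :
    diamond m i a b = diamond m i a p := by
  simp only [diamond, h₁, h₂]
  push_cast
  ring

variable [NeZero N]

/-- `m` satisfies the defining rules of the generalised frieze `m_R` of the dissection `D`. -/
structure IsFrieze (D : Finset (ZMod N × ZMod N)) (m : ZMod N → ZMod N → ℕ) : Prop where
  noncross : ∀ d ∈ D, ∀ d' ∈ D, ¬ Crosses N d d'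
  piece : ∀ i j, i ≠ j → Uncrossed D i j → m i j = 1
  split : ∀ i j k l, (k, l) ∈ D → Crosses N (i, j) (k, l) → Uncrossed D j k →
    Uncrossed D j l → m i j = m i k + m i l

variable {D : Finset (ZMod N × ZMod N)}

namespace IsFrieze

theorem apply_eq_add (hm : IsFrieze D m) {x y p q : ZMod N} (hpq : (p, q) ∈ D ∨ (q, p) ∈ D)
    (hc : Crosses N (x, y) (p, q)) (hp : Uncrossed D y p) (hq : Uncrossed D y q) :
    m x y = m x p + m x q := by
  rcases hpq with h | h
  · exact hm.split x y p q h hc hp hq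
  · rw [hm.split x y q p h ((crosses_swap_right x y p q).2 hc) hq hp, add_comm]

theorem apply_add_one (hm : IsFrieze D m) (hN : 1 < N) (x : ZMod N) : m x (x + 1) = 1 :=
  have : Fact (1 < N) := ⟨hN⟩
  hm.piece _ _ (by simp) (uncrossed_add_one hN x)

theorem apply_add_one_left (hm : IsFrieze D m) (hN : 1 < N) (x : ZMod N) : m (x + 1) x = 1 :=
  have : Fact (1 < N) := ⟨hN⟩
  hm.piece _ _ (by simp) (uncrossed_add_one hN x).symm

theorem apply_eq_apply_of_between (hm : IsFrieze D m) {a b p q x : ZMod N}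
    (hpq : (p, q) ∈ D ∨ (q, p) ∈ D) (hap : Uncrossed D a p) (haq : Uncrossed D a q)
    (hbp : Uncrossed D b p) (hbq : Uncrossed D b q) (hp : 0 < (p - b).val)
    (hpx : (p - b).val ≤ (x - b).val) (hxq : (x - b).val ≤ (q - b).val)
    (hqa : (q - b).val < (a - b).val) : m x a = m x b := by
  have hb : (b - b).val = 0 := by simp
  rcases hpx.eq_or_lt with hpx | hpx
  · obtain rfl := ZMod.eq_of_val_sub_eq hpx
    rw [hm.piece _ _ (by rintro rfl; omega) hap.symm, hm.piece _ _ (by rintro rfl; omega) hbp.symm]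
  rcases hxq.eq_or_lt with hxq | hxq
  · obtain rfl := ZMod.eq_of_val_sub_eq hxq
    rw [hm.piece _ _ (by rintro rfl; omega) haq.symm, hm.piece _ _ (by rintro rfl; omega) hbq.symm]
  rw [hm.apply_eq_add hpq (crosses_of_interleave b hpx hxq hqa) hap haq,
    hm.apply_eq_add hpq (crosses_of_interleave' b (by omega) hpx hxq) hbp hbq]

theorem diamond_eq_zero_of_spansEdge (hm : IsFrieze D m) {a b i p q : ZMod N}
    (hpq : (p, q) ∈ D ∨ (q, p) ∈ D) (hap : Uncrossed D a p) (haq : Uncrossed D a q)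
    (hbp : Uncrossed D b p) (hbq : Uncrossed D b q) (hspan : SpansEdge b a (i - 1) p q)
    (hsucc : (i - b).val = (i - 1 - b).val + 1) (hpb : p ≠ b) (hqa : q ≠ a) :
    diamond m i a b = 0 := by
  obtain ⟨hpi, hiq, hqa', -⟩ := hspan
  have hp : 0 < (p - b).val := ZMod.val_pos.2 (sub_ne_zero.2 hpb)
  have hqa'' : (q - b).val < (a - b).val :=
    hqa'.lt_of_ne fun h => hqa (ZMod.eq_of_val_sub_eq h)
  exact diamond_eq_zero_of_apply_eq
    (hm.apply_eq_apply_of_between hpq hap haq hbp hbq hp hpi (by omega) hqa'')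
    (hm.apply_eq_apply_of_between hpq hap haq hbp hbq hp (by omega) (by omega) hqa'')

theorem diamond_eq_one_of_mem_left (hm : IsFrieze D m) {a b i : ZMod N}
    (hdiag : (b, i) ∈ D ∨ (i, b) ∈ D) (hab : Uncrossed D a b) (hai : Uncrossed D a i)
    (hi : 0 < (i - 1 - b).val) (hsucc : (i - b).val = (i - 1 - b).val + 1)
    (hia : (i - b).val < (a - b).val) : diamond m i a b = 1 := by
  have hb : (b - b).val = 0 := by simp
  have hN : 1 < N := by have := ZMod.val_lt (a - b); omega
  have hcross : Crosses N (i - 1, a) (b, i) := crosses_of_interleave b (by omega) (by omega) hia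
  have hedge : m (i - 1) i = 1 := by simpa using hm.apply_add_one hN (i - 1)
  rw [diamond, hm.apply_eq_add hdiag hcross hab hai, hedge,
    hm.piece i a (by rintro rfl; omega) hai.symm,
    hm.piece i b (by rintro rfl; omega) (uncrossed_of_mem hm.noncross hdiag).symm]
  push_cast
  ring

theorem diamond_eq_one_of_mem_right (hm : IsFrieze D m) {a b i : ZMod N}
    (hdiag : (i - 1, a) ∈ D ∨ (a, i - 1) ∈ D) (hab : Uncrossed D a b)
    (hbi : Uncrossed D b (i - 1)) (hi : 0 < (i - 1 - b).val)
    (hsucc : (i - b).val = (i - 1 - b).val + 1) (hia : (i - b).val < (a - b).val) :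
    diamond m i a b = 1 := by
  have hb : (b - b).val = 0 := by simp
  have hN : 1 < N := by have := ZMod.val_lt (a - b); omega
  have hcross : Crosses N (i, b) (i - 1, a) :=
    crosses_of_interleave' b (by omega) (by omega) hia
  have hedge : m i (i - 1) = 1 := by simpa using hm.apply_add_one_left hN (i - 1)
  rw [diamond, hm.apply_eq_add hdiag hcross hbi hab.symm, hedge,
    hm.piece (i - 1) a (by rintro h; rw [← h] at hia; omega) (uncrossed_of_mem hm.noncross hdiag),
    hm.piece (i - 1) b (by rintro h; rw [h] at hi; omega) hbi.symm]
  push_cast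
  ring

theorem diamond_eq_diamond_of_mem_left (hm : IsFrieze D m) {a b i q : ZMod N}
    (hbq : (b, q) ∈ D ∨ (q, b) ∈ D) (hab : Uncrossed D a b) (haq : Uncrossed D a q)
    (hi : 0 < (i - 1 - b).val) (hsucc : (i - b).val = (i - 1 - b).val + 1)
    (hiq : (i - b).val < (q - b).val) (hqa : (q - b).val < (a - b).val) :
    diamond m i a b = diamond m i q b := by
  have hb : (b - b).val = 0 := by simp
  exact diamond_eq_diamond_of_apply_left
    (hm.apply_eq_add hbq (crosses_of_interleave b (by omega) (by omega) hqa) hab haq)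
    (hm.apply_eq_add hbq (crosses_of_interleave b (by omega) hiq hqa) hab haq)

theorem diamond_eq_diamond_of_mem_right (hm : IsFrieze D m) {a b i p : ZMod N}
    (hpa : (p, a) ∈ D ∨ (a, p) ∈ D) (hab : Uncrossed D a b) (hbp : Uncrossed D b p)
    (hp : 0 < (p - b).val) (hpi : (p - b).val < (i - 1 - b).val)
    (hsucc : (i - b).val = (i - 1 - b).val + 1) (hia : (i - b).val < (a - b).val) :
    diamond m i a b = diamond m i a p := by
  have hb : (b - b).val = 0 := by simp
  exact diamond_eq_diamond_of_apply_right
    (hm.apply_eq_add hpa (crosses_of_interleave' b (by omega) hpi (by omega)) hbp hab.symm)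
    (hm.apply_eq_add hpa (crosses_of_interleave' b (by omega) (by omega) hia) hbp hab.symm)

theorem diamond_eq_zero_of_forall_not_spansEdge (hm : IsFrieze D m) {a b i : ZMod N}
    (hab : Uncrossed D a b) (hi : 0 < (i - 1 - b).val)
    (hsucc : (i - b).val = (i - 1 - b).val + 1) (hia : (i - b).val < (a - b).val)
    (h : ∀ u w, (u, w) ∈ D → ¬ SpansEdge b a (i - 1) u w ∧ ¬ SpansEdge b a (i - 1) w u) :
    diamond m i a b = 0 := by
  have hb : (b - b).val = 0 := by simp
  obtain ⟨hia₁, hib₁⟩ := uncrossed_of_forall_not_spansEdge hab (.inl rfl) (by omega) h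
  obtain ⟨hia₂, hib₂⟩ := uncrossed_of_forall_not_spansEdge hab (.inr hsucc) hia h
  apply diamond_eq_zero_of_apply_eq
  · rw [hm.piece _ a (by rintro h; rw [h] at hsucc; omega) hia₁,
      hm.piece _ b (by rintro h; rw [h] at hi; omega) hib₁]
  · rw [hm.piece i a (by rintro rfl; omega) hia₂, hm.piece i b (by rintro rfl; omega) hib₂]

theorem diamond_eq_zero_or_eq_one (hm : IsFrieze D m) {a b i : ZMod N} (hab : Uncrossed D a b)
    (hib : i - 1 ≠ b) (hi : StrBtw N b i a) : diamond m i a b = 0 ∨ diamond m i a b = 1 := by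
  induction hs : (a - b).val using Nat.strong_induction_on generalizing a b with
  | _ s ih =>
  obtain ⟨hi₀, hia⟩ := hi
  have hb : (b - b).val = 0 := by simp
  have hsucc := ZMod.val_sub_eq_val_sub_one_sub_add_one (i := i) (b := b)
    (by rintro rfl; simp at hi₀)
  have hi₁ : 0 < (i - 1 - b).val := ZMod.val_pos.2 (sub_ne_zero.2 hib)
  by_cases hspan :
      ∃ u w, (u, w) ∈ D ∧ (SpansEdge b a (i - 1) u w ∨ SpansEdge b a (i - 1) w u)
  swap
  · push Not at hspan
    exact .inl (hm.diamond_eq_zero_of_forall_not_spansEdge hab hi₁ hsucc hia hspan)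
  obtain ⟨p, q, hpq, hsp, hap, haq, hbp, hbq⟩ :=
    exists_spansEdge_uncrossed hm.noncross hab hspan
  have ⟨hpk, hkq, hqa_le, hne⟩ := hsp
  by_cases hpb : p = b
  · subst p
    rcases eq_or_ne q i with rfl | hqi
    · exact .inr (hm.diamond_eq_one_of_mem_left hpq hab haq hi₁ hsucc hia)
    have hqi' : (q - b).val ≠ (i - b).val := fun h => hqi (ZMod.eq_of_val_sub_eq h)
    have hiq' : (i - b).val < (q - b).val := by omega
    have hqa' : (q - b).val < (a - b).val := by omega
    rw [hm.diamond_eq_diamond_of_mem_left hpq hab haq hi₁ hsucc hiq' hqa']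
    exact ih _ (hs ▸ hqa') hbq.symm hib ⟨hi₀, hiq'⟩ rfl
  by_cases hqa : q = a
  · subst q
    rcases eq_or_ne p (i - 1) with rfl | hpi
    · exact .inr (hm.diamond_eq_one_of_mem_right hpq hab hbp hi₁ hsucc hia)
    have hp : 0 < (p - b).val := ZMod.val_pos.2 (sub_ne_zero.2 hpb)
    have hpi' : (p - b).val < (i - 1 - b).val :=
      hpk.lt_of_ne fun h => hpi (ZMod.eq_of_val_sub_eq h)
    have hip := ZMod.val_sub_sub_eq_of_le (x := i) (show (p - b).val ≤ (i - b).val by omega)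
    have hap' := ZMod.val_sub_sub_eq_of_le (x := a) (show (p - b).val ≤ (a - b).val by omega)
    rw [hm.diamond_eq_diamond_of_mem_right hpq hab hbp hp hpi' hsucc hia]
    exact ih _ (by omega) hap (Ne.symm hpi) ⟨by omega, by omega⟩ rfl
  exact .inl (hm.diamond_eq_zero_of_spansEdge hpq hap haq hbp hbq hsp hsucc hpb hqa)

end IsFrieze

end Frieze

theorem stmt_14_general (n : ℕ) (D : Finset (ZMod (n + 3) × ZMod (n + 3)))
    (hnoncross : ∀ d ∈ D, ∀ d' ∈ D, ¬ Crosses (n + 3) d d')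
    (m : ZMod (n + 3) → ZMod (n + 3) → ℕ)
    (hpiece : ∀ i j, i ≠ j → (∀ d ∈ D, ¬ Crosses (n + 3) (i, j) d) → m i j = 1)
    (hrec : ∀ i j k l, (k, l) ∈ D → Crosses (n + 3) (i, j) (k, l) →
      (∀ d ∈ D, ¬ Crosses (n + 3) (j, k) d) → (∀ d ∈ D, ¬ Crosses (n + 3) (j, l) d) →
      m i j = m i k + m i l)
    (f : ZMod (n + 3) → ZMod (n + 3) → ℤ)
    (hf : ∀ a b, f a b = if a = b ∨ b = a + 1 ∨ a = b + 1 then 1 else (m a b : ℤ)) :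
    ∀ i j : ZMod (n + 3), j ≠ i → j ≠ i + 1 → i ≠ j + 1 →
      f (i - 1) (j - 1) * f i j - f (i - 1) j * f i (j - 1) = 0 ∨
      f (i - 1) (j - 1) * f i j - f (i - 1) j * f i (j - 1) = 1 := by
  intro i j hji hji₁ hij₁
  have hm : IsFrieze D m := ⟨hnoncross, hpiece, hrec⟩
  have hN : 1 < n + 3 := by omega
  have hfm : ∀ x y, x ≠ y → f x y = m x y := by
    intro x y hxy
    rw [hf]
    split_ifs with h
    · rcases h with h | rfl | rfl
      exacts [absurd h hxy, by simp [hm.apply_add_one hN], by simp [hm.apply_add_one_left hN]]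
    · rfl
  have hedge : Uncrossed D (j - 1) j := by simpa using uncrossed_add_one hN (j - 1)
  have hbtw : StrBtw (n + 3) j i (j - 1) := by
    have hval : (j - 1 - j).val = n + 2 := by
      rw [sub_sub_cancel_left]; exact ZMod.val_neg_one _
    have hne : (i - j).val ≠ (j - 1 - j).val := fun h =>
      hji₁ (by rw [ZMod.eq_of_val_sub_eq h, sub_add_cancel])
    refine ⟨by rwa [ne_eq, ZMod.val_eq_zero, sub_eq_zero, eq_comm], ?_⟩
    have := ZMod.val_lt (i - j)
    omega
  rw [hfm (i - 1) (j - 1) (by simpa using hji.symm), hfm i j hji.symm,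
    hfm (i - 1) j (by rintro rfl; simp at hij₁), hfm i (j - 1) (by rintro rfl; simp at hji₁)]
  exact hm.diamond_eq_zero_or_eq_one hedge (by rintro rfl; simp at hij₁) hbtw

/-- For a polygon dissection `D` of the `(n+3)`-gon and the associated
generalised frieze values `m = m_R` (defined by the same inductive rules as in
STATEMENT 13), each diamond difference
`m(i−1,j−1)·m(i,j) − m(i−1,j)·m(i,j−1)` equals `0` or `1`, where a factor `m(a,b)` is
interpreted as `1` if `a` and `b` are equal or neighbouring vertices (the corresponding
object of the cluster category is zero).  Here `(i,j)` runs over the diagonals of the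
polygon (`j ∉ {i, i+1, i−1}`), corresponding to the AR triangles
`(i−1,j−1) → (i−1,j) ⊕ (i,j−1) → (i,j)`. -/
theorem stmt_14 (n : ℕ) (D : Finset (ZMod (n + 3) × ZMod (n + 3)))
    (hdiagonal : ∀ d ∈ D, d.1 ≠ d.2 ∧ d.2 ≠ d.1 + 1 ∧ d.1 ≠ d.2 + 1)
    (hnoncross : ∀ d ∈ D, ∀ d' ∈ D, ¬ Crosses (n + 3) d d')
    (m : ZMod (n + 3) → ZMod (n + 3) → ℕ)
    (hrefl : ∀ i, m i i = 0)
    (hpiece : ∀ i j, i ≠ j → (∀ d ∈ D, ¬ Crosses (n + 3) (i, j) d) → m i j = 1)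
    (hrec : ∀ i j k l, (k, l) ∈ D → Crosses (n + 3) (i, j) (k, l) →
      (∀ d ∈ D, ¬ Crosses (n + 3) (j, k) d) → (∀ d ∈ D, ¬ Crosses (n + 3) (j, l) d) →
      m i j = m i k + m i l)
    (f : ZMod (n + 3) → ZMod (n + 3) → ℤ)
    (hf : ∀ a b, f a b = if a = b ∨ b = a + 1 ∨ a = b + 1 then 1 else (m a b : ℤ)) :
    ∀ i j : ZMod (n + 3), j ≠ i → j ≠ i + 1 → i ≠ j + 1 →
      f (i - 1) (j - 1) * f i j - f (i - 1) j * f i (j - 1) = 0 ∨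
      f (i - 1) (j - 1) * f i j - f (i - 1) j * f i (j - 1) = 1 :=
  stmt_14_general n D hnoncross m hpiece hrec f hf
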